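/- With Ω = [[Ω₁,Γ],[Γ†,Ω₂]] bounded self-adjoint on H = H₁ ⊕ H₂, the decoupled subspace H₂d = H₂ ⊖ H₂c (where H₂c = O_Ω(H₁) ⊖ H₁) is invariant under Ω, and Ω restricted to H₂d equals Ω₂ restricted to H₂d; in particular Γ vanishes on H₂d. -/

import Mathlib

open ContinuousLinearMap MeasureTheory

/-- The orbit of a set `S` under an operator `Ω`: the smallest closed `Ω`-invariant
subspace containing `S`. -/
noncomputable def orbit {H : Type*} [NormedAddCommGroup H] [InnerProductSpace ℂ H]
    (Ω : H →L[ℂ] H) (S : Set H) : Submodule ℂ H :=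
  sInf {K : Submodule ℂ H | S ⊆ K ∧ IsClosed (K : Set H) ∧ ∀ x ∈ K, Ω x ∈ K}

variable {H₁ H₂ : Type*} [NormedAddCommGroup H₁] [InnerProductSpace ℂ H₁] [CompleteSpace H₁]
  [NormedAddCommGroup H₂] [InnerProductSpace ℂ H₂] [CompleteSpace H₂]

/-- Inclusion of `H₁` into the Hilbert space direct sum `H₁ ⊕ H₂`. -/
noncomputable def inl' : H₁ →L[ℂ] WithLp 2 (H₁ × H₂) :=
  (WithLp.prodContinuousLinearEquiv 2 ℂ H₁ H₂).symm.toContinuousLinearMap ∘L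
    ContinuousLinearMap.inl ℂ H₁ H₂

/-- Inclusion of `H₂` into the Hilbert space direct sum `H₁ ⊕ H₂`. -/
noncomputable def inr' : H₂ →L[ℂ] WithLp 2 (H₁ × H₂) :=
  (WithLp.prodContinuousLinearEquiv 2 ℂ H₁ H₂).symm.toContinuousLinearMap ∘L
    ContinuousLinearMap.inr ℂ H₁ H₂

/-- The block operator `[[Ω₁, Γ], [Γ†, Ω₂]]` on `H₁ ⊕ H₂`. -/
noncomputable def blockOp (Ω₁ : H₁ →L[ℂ] H₁) (Ω₂ : H₂ →L[ℂ] H₂) (Γ : H₂ →L[ℂ] H₁) :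
    WithLp 2 (H₁ × H₂) →L[ℂ] WithLp 2 (H₁ × H₂) :=
  (WithLp.prodContinuousLinearEquiv 2 ℂ H₁ H₂).symm.toContinuousLinearMap ∘L
    ((Ω₁ ∘L ContinuousLinearMap.fst ℂ H₁ H₂ + Γ ∘L ContinuousLinearMap.snd ℂ H₁ H₂).prod
      ((ContinuousLinearMap.adjoint Γ) ∘L ContinuousLinearMap.fst ℂ H₁ H₂ +
        Ω₂ ∘L ContinuousLinearMap.snd ℂ H₁ H₂)) ∘L
    (WithLp.prodContinuousLinearEquiv 2 ℂ H₁ H₂).toContinuousLinearMap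

/-- `H₁` as a subspace of `H₁ ⊕ H₂`. -/
noncomputable def sub1 : Submodule ℂ (WithLp 2 (H₁ × H₂)) := LinearMap.range ((inl' : H₁ →L[ℂ] WithLp 2 (H₁ × H₂)) : H₁ →ₗ[ℂ] WithLp 2 (H₁ × H₂))

/-- `H₂` as a subspace of `H₁ ⊕ H₂`. -/
noncomputable def sub2 : Submodule ℂ (WithLp 2 (H₁ × H₂)) := LinearMap.range ((inr' : H₂ →L[ℂ] WithLp 2 (H₁ × H₂)) : H₂ →ₗ[ℂ] WithLp 2 (H₁ × H₂))

/-!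
Since `H₁ ≤ O := O_Ω(H₁)` and `H₁` is complemented, `O = H₁ ⊔ (O ⊓ H₁ᗮ) = H₁ ⊔ H₂c`, so
`H₂d = H₁ᗮ ⊓ H₂cᗮ = Oᗮ`. The orthogonal complement of an invariant subspace of a self-adjoint
operator is invariant, hence `Ω` maps `H₂d` into `H₂d ⊆ H₂`; for `y ∈ H₂d` the `H₁`-component
`Γ y` of `Ω (0, y) = (Γ y, Ω₂ y)` must therefore vanish.
-/

theorem subset_orbit {H : Type*} [NormedAddCommGroup H] [InnerProductSpace ℂ H]
    (Ω : H →L[ℂ] H) (S : Set H) : S ⊆ orbit Ω S :=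
  fun _ hx => Submodule.mem_sInf.mpr fun _ hK => hK.1 hx

theorem orbit_mem_invtSubmodule {H : Type*} [NormedAddCommGroup H] [InnerProductSpace ℂ H]
    (Ω : H →L[ℂ] H) (S : Set H) : orbit Ω S ∈ Module.End.invtSubmodule (Ω : H →ₗ[ℂ] H) :=
  fun _ hx => Submodule.mem_sInf.mpr fun K hK => hK.2.2 _ (Submodule.mem_sInf.mp hx K hK)

theorem Submodule.inf_orthogonal_inf_orthogonal_eq {𝕜 E : Type*} [RCLike 𝕜]
    [NormedAddCommGroup E] [InnerProductSpace 𝕜 E] {U K : Submodule 𝕜 E}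
    [U.HasOrthogonalProjection] (h : U ≤ K) : Uᗮ ⊓ (Uᗮ ⊓ K)ᗮ = Kᗮ := by
  rw [Submodule.inf_orthogonal, Submodule.sup_orthogonal_inf_of_hasOrthogonalProjection h]

theorem blockOp_fst (Ω₁ : H₁ →L[ℂ] H₁) (Ω₂ : H₂ →L[ℂ] H₂) (Γ : H₂ →L[ℂ] H₁)
    (x : WithLp 2 (H₁ × H₂)) : (blockOp Ω₁ Ω₂ Γ x).fst = Ω₁ x.fst + Γ x.snd :=
  rfl

theorem blockOp_snd (Ω₁ : H₁ →L[ℂ] H₁) (Ω₂ : H₂ →L[ℂ] H₂) (Γ : H₂ →L[ℂ] H₁)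
    (x : WithLp 2 (H₁ × H₂)) : (blockOp Ω₁ Ω₂ Γ x).snd = adjoint Γ x.fst + Ω₂ x.snd :=
  rfl

theorem blockOp_inr' (Ω₁ : H₁ →L[ℂ] H₁) (Ω₂ : H₂ →L[ℂ] H₂) (Γ : H₂ →L[ℂ] H₁) (y : H₂) :
    blockOp Ω₁ Ω₂ Γ (inr' y) = inl' (Γ y) + inr' (Ω₂ y) :=
  WithLp.ofLp_injective 2 <| Prod.ext (by simp [blockOp_fst, inl', inr'])
    (by simp [blockOp_snd, inl', inr'])

theorem isSelfAdjoint_blockOp {Ω₁ : H₁ →L[ℂ] H₁} {Ω₂ : H₂ →L[ℂ] H₂} (Γ : H₂ →L[ℂ] H₁)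
    (hΩ₁ : IsSelfAdjoint Ω₁) (hΩ₂ : IsSelfAdjoint Ω₂) : IsSelfAdjoint (blockOp Ω₁ Ω₂ Γ) := by
  refine isSelfAdjoint_iff_isSymmetric.mpr fun x y => ?_
  have h₁ := hΩ₁.isSymmetric x.fst y.fst
  have h₂ := hΩ₂.isSymmetric x.snd y.snd
  simp only [coe_coe, WithLp.prod_inner_apply, WithLp.ofLp_fst, WithLp.ofLp_snd, blockOp_fst,
    blockOp_snd, inner_add_left, inner_add_right, adjoint_inner_left, adjoint_inner_right] at h₁ h₂ ⊢
  rw [h₁, h₂]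
  ring

omit [CompleteSpace H₁] [CompleteSpace H₂] in
theorem mem_sub2_iff (x : WithLp 2 (H₁ × H₂)) :
    x ∈ (sub2 : Submodule ℂ (WithLp 2 (H₁ × H₂))) ↔ x.fst = 0 := by
  refine ⟨?_, fun h => ⟨x.snd, WithLp.ofLp_injective 2 <| Prod.ext h.symm rfl⟩⟩
  rintro ⟨y, rfl⟩
  rfl

omit [CompleteSpace H₁] [CompleteSpace H₂] in
theorem orthogonal_sub1 :
    (sub1 : Submodule ℂ (WithLp 2 (H₁ × H₂)))ᗮ = sub2 := by
  ext x
  rw [Submodule.mem_orthogonal, mem_sub2_iff]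
  constructor
  · intro h
    simpa [WithLp.prod_inner_apply, inl'] using h (inl' x.fst) ⟨x.fst, rfl⟩
  · rintro h _ ⟨u, rfl⟩
    simp [WithLp.prod_inner_apply, inl', h]

instance : (sub1 : Submodule ℂ (WithLp 2 (H₁ × H₂))).HasOrthogonalProjection where
  exists_orthogonal x := ⟨inl' x.fst, ⟨x.fst, rfl⟩, by
    rw [orthogonal_sub1, mem_sub2_iff]
    simp [inl']⟩

/-- the decoupled subspace `H₂d = H₂ ⊖ H₂c` is `Ω`-invariant, and on it `Ω`
acts as `Ω₂`; in particular `Γ` vanishes on `H₂d`. -/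
theorem decoupled_invariant
    (Ω₁ : H₁ →L[ℂ] H₁) (Ω₂ : H₂ →L[ℂ] H₂) (Γ : H₂ →L[ℂ] H₁)
    (hΩ₁ : IsSelfAdjoint Ω₁) (hΩ₂ : IsSelfAdjoint Ω₂)
    (Ω : WithLp 2 (H₁ × H₂) →L[ℂ] WithLp 2 (H₁ × H₂)) (hΩ : Ω = blockOp Ω₁ Ω₂ Γ)
    (H2c H2d : Submodule ℂ (WithLp 2 (H₁ × H₂)))
    (hH2c : H2c = orbit Ω (sub1 : Submodule ℂ (WithLp 2 (H₁ × H₂))) ⊓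
      (sub1 : Submodule ℂ (WithLp 2 (H₁ × H₂)))ᗮ)
    (hH2d : H2d = (sub2 : Submodule ℂ (WithLp 2 (H₁ × H₂))) ⊓ H2cᗮ) :
    (∀ x ∈ H2d, Ω x ∈ H2d) ∧
    (∀ y : H₂, inr' y ∈ H2d → Ω (inr' y) = inr' (Ω₂ y) ∧ Γ y = 0) := by
  subst hΩ hH2c
  have hH2d_eq :
      H2d = (orbit (blockOp Ω₁ Ω₂ Γ) (sub1 : Submodule ℂ (WithLp 2 (H₁ × H₂))))ᗮ := by
    rw [hH2d, ← orthogonal_sub1, inf_comm (orbit _ _),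
      Submodule.inf_orthogonal_inf_orthogonal_eq (subset_orbit _ _)]
  have hinv : ∀ x ∈ H2d, blockOp Ω₁ Ω₂ Γ x ∈ H2d := hH2d_eq ▸
    (isSelfAdjoint_blockOp Γ hΩ₁ hΩ₂).isSymmetric.orthogonalComplement_mem_invtSubmodule
      (orbit_mem_invtSubmodule _ _)
  refine ⟨hinv, fun y hy => ?_⟩
  have hΓ : Γ y = 0 := by
    have h := hinv _ hy
    rw [hH2d, Submodule.mem_inf, mem_sub2_iff, blockOp_inr'] at h
    simpa [inl', inr'] using h.1
  exact ⟨by rw [blockOp_inr', hΓ, map_zero, zero_add], hΓ⟩
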